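/- arXiv:2507.09254 — 5 statements merged into one kernel-verified Lean document; each statement's English description precedes it below -/
import Mathlib

section
/- Let n ≥ 1 and let 1 ≤ m₁ < m₂ ≤ n be integers. For i = 1, 2 let bᵢ be the largest integer with bᵢ·mᵢ ≤ n and vᵢ = n − bᵢ·mᵢ. Then the partition (m₁^{b₁}, v₁) of n is strictly dominated by the partition (m₂^{b₂}, v₂) of n (parts equal to 0 being omitted). -/
/-- `p` is a partition of `n`: a weakly decreasing list of positive integers summing to `n`. -/
def IsPartitionOf (p : List ℕ) (n : ℕ) : Prop :=
  p.Pairwise (· ≥ ·) ∧ (∀ x ∈ p, 0 < x) ∧ p.sum = n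

/-- `Dominates q p` means `p ⊴ q` in the dominance order. -/
def Dominates (q p : List ℕ) : Prop :=
  ∀ k : ℕ, (p.take k).sum ≤ (q.take k).sum

def replicateWithRem (b m v : ℕ) : List ℕ :=
  List.replicate b m ++ if v = 0 then [] else [v]

namespace replicateWithRem

theorem sum_take (b m v k : ℕ) :
    ((replicateWithRem b m v).take k).sum = min k b * m + if k ≤ b then 0 else v := by
  rw [replicateWithRem, List.take_append, List.sum_append, List.take_replicate,
    List.sum_replicate, smul_eq_mul, List.length_replicate]
  congr 1
  rcases le_or_gt k b with h | h
  · rw [Nat.sub_eq_zero_of_le h, if_pos h]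
    split_ifs <;> simp
  · rw [if_neg (Nat.not_le.mpr h)]
    split_ifs with hv
    · simp [hv]
    · rw [List.take_of_length_le (by simp; omega)]
      simp

theorem head?_of_pos {b : ℕ} (hb : 0 < b) (m v : ℕ) :
    (replicateWithRem b m v).head? = some m := by
  obtain ⟨c, rfl⟩ := Nat.exists_eq_add_of_lt hb
  simp [replicateWithRem, List.replicate_succ]

theorem ne_of_ne {b₁ b₂ m₁ m₂ : ℕ} (hb₁ : 0 < b₁) (hb₂ : 0 < b₂) (hm : m₁ ≠ m₂) (v₁ v₂ : ℕ) :
    replicateWithRem b₁ m₁ v₁ ≠ replicateWithRem b₂ m₂ v₂ := fun h => by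
  simpa [head?_of_pos hb₁, head?_of_pos hb₂, hm] using congrArg List.head? h

/-- Up to `b₂` parts the larger parts win; after that the second list has already reached `n`. -/
theorem dominates {b₁ b₂ m₁ m₂ v₁ v₂ n : ℕ} (hm : m₁ ≤ m₂) (hb : b₂ ≤ b₁)
    (h₁ : b₁ * m₁ + v₁ = n) (h₂ : b₂ * m₂ + v₂ = n) :
    Dominates (replicateWithRem b₂ m₂ v₂) (replicateWithRem b₁ m₁ v₁) := by
  intro k
  rw [sum_take, sum_take]
  rcases le_or_gt k b₂ with hk₂ | hk₂
  · have hk₁ : k ≤ b₁ := hk₂.trans hb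
    simpa [hk₂, hk₁] using Nat.mul_le_mul_left k hm
  · rw [min_eq_right hk₂.le, if_neg (Nat.not_le.mpr hk₂), h₂]
    rcases le_or_gt k b₁ with hk₁ | hk₁
    · rw [min_eq_left hk₁, if_pos hk₁]
      have := Nat.mul_le_mul_right m₁ hk₁
      omega
    · rw [min_eq_right hk₁.le, if_neg (Nat.not_le.mpr hk₁)]
      omega

end replicateWithRem

theorem Nat.pos_of_lt_succ_mul {n m b : ℕ} (hm : m ≤ n) (h : n < (b + 1) * m) : 0 < b := by
  rcases Nat.eq_zero_or_pos b with rfl | hb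
  · omega
  · exact hb

theorem Nat.le_of_mul_le_of_lt_succ_mul {n m₁ m₂ b₁ b₂ : ℕ} (hm : m₁ ≤ m₂)
    (h₂ : b₂ * m₂ ≤ n) (h₁ : n < (b₁ + 1) * m₁) : b₂ ≤ b₁ :=
  Nat.lt_succ_iff.mp <| Nat.lt_of_mul_lt_mul_right <|
    h₂.trans_lt (h₁.trans_le (Nat.mul_le_mul_left _ hm))

theorem stmt1_general (n m₁ m₂ b₁ b₂ v₁ v₂ : ℕ) (h12 : m₁ < m₂)
    (hm₂ : m₂ ≤ n)
    (hb₁ : b₁ * m₁ ≤ n) (hb₁max : n < (b₁ + 1) * m₁) (hv₁ : v₁ = n - b₁ * m₁)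
    (hb₂ : b₂ * m₂ ≤ n) (hb₂max : n < (b₂ + 1) * m₂) (hv₂ : v₂ = n - b₂ * m₂) :
    Dominates (List.replicate b₂ m₂ ++ if v₂ = 0 then [] else [v₂])
        (List.replicate b₁ m₁ ++ if v₁ = 0 then [] else [v₁]) ∧
      (List.replicate b₁ m₁ ++ if v₁ = 0 then [] else [v₁]) ≠
        (List.replicate b₂ m₂ ++ if v₂ = 0 then [] else [v₂]) := by
  have hb₁pos := Nat.pos_of_lt_succ_mul (h12.le.trans hm₂) hb₁max
  have hb₂pos := Nat.pos_of_lt_succ_mul hm₂ hb₂max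
  exact ⟨replicateWithRem.dominates (n := n) h12.le
      (Nat.le_of_mul_le_of_lt_succ_mul h12.le hb₂ hb₁max) (by omega) (by omega),
    replicateWithRem.ne_of_ne hb₁pos hb₂pos h12.ne v₁ v₂⟩

/-- If `1 ≤ m₁ < m₂ ≤ n` then the partition `(m₁^{b₁}, v₁)` of `n` is strictly dominated by
the partition `(m₂^{b₂}, v₂)` of `n`, where `bᵢ` is maximal with `bᵢ*mᵢ ≤ n` and
`vᵢ = n - bᵢ*mᵢ` (parts equal to `0` omitted). -/
theorem stmt1 (n m₁ m₂ b₁ b₂ v₁ v₂ : ℕ) (hn : 1 ≤ n) (hm₁ : 1 ≤ m₁) (h12 : m₁ < m₂)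
    (hm₂ : m₂ ≤ n)
    (hb₁ : b₁ * m₁ ≤ n) (hb₁max : n < (b₁ + 1) * m₁) (hv₁ : v₁ = n - b₁ * m₁)
    (hb₂ : b₂ * m₂ ≤ n) (hb₂max : n < (b₂ + 1) * m₂) (hv₂ : v₂ = n - b₂ * m₂) :
    Dominates (List.replicate b₂ m₂ ++ if v₂ = 0 then [] else [v₂])
        (List.replicate b₁ m₁ ++ if v₁ = 0 then [] else [v₁]) ∧
      (List.replicate b₁ m₁ ++ if v₁ = 0 then [] else [v₁]) ≠
        (List.replicate b₂ m₂ ++ if v₂ = 0 then [] else [v₂]) :=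
  stmt1_general n m₁ m₂ b₁ b₂ v₁ v₂ h12 hm₂ hb₁ hb₁max hv₁ hb₂ hb₂max hv₂
end

section
/- Let n ≥ 1 and let m be an integer with 1 ≤ m ≤ 2n. There exists a symplectic partition of 2n whose largest part equals m if and only if m ≤ n or m is even. -/
/-- A partition is symplectic if every odd part occurs an even number of times. -/
def Symplectic (p : List ℕ) : Prop :=
  ∀ x : ℕ, Odd x → Even (p.count x)

/-!
An odd largest part `m` of a symplectic partition occurs at least twice, so `2m ≤ 2n`.
Conversely, `m` (when `m` is even) or `m, m` (when `m` is odd), padded with ones,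
is a symplectic partition of `2n` with largest part `m`; the number of ones is even
because `2n` and the sum of the large parts are.
-/

lemma List.count_mul_le_sum (l : List ℕ) (a : ℕ) : l.count a * a ≤ l.sum := by
  have h : (List.replicate (l.count a) a).Sublist l := List.replicate_sublist_iff.2 le_rfl
  simpa using h.sum_le_sum fun _ _ ↦ Nat.zero_le _

lemma IsPartitionOf.append {p q : List ℕ} {a b : ℕ} (hp : IsPartitionOf p a)
    (hq : IsPartitionOf q b) (hpq : ∀ x ∈ p, ∀ y ∈ q, y ≤ x) :
    IsPartitionOf (p ++ q) (a + b) := by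
  obtain ⟨hps, hpp, rfl⟩ := hp
  obtain ⟨hqs, hqp, rfl⟩ := hq
  refine ⟨List.pairwise_append.2 ⟨hps, hqs, hpq⟩, ?_, List.sum_append⟩
  simpa only [List.mem_append, or_imp, forall_and] using ⟨hpp, hqp⟩

lemma isPartitionOf_replicate {a : ℕ} (ha : 0 < a) (k : ℕ) :
    IsPartitionOf (List.replicate k a) (k * a) := by
  refine ⟨List.pairwise_replicate.2 (Or.inr le_rfl), ?_, by simp⟩
  intro x hx
  rwa [List.eq_of_mem_replicate hx]

lemma Symplectic.append {p q : List ℕ} (hp : Symplectic p) (hq : Symplectic q) :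
    Symplectic (p ++ q) := fun x hx ↦ by
  rw [List.count_append]
  exact (hp x hx).add (hq x hx)

lemma symplectic_replicate {k a : ℕ} (h : Even k ∨ Even a) :
    Symplectic (List.replicate k a) := fun x hx ↦ by
  rw [List.count_replicate]
  split_ifs with hax
  · rcases h with hk | ha
    · exact hk
    · exact absurd (beq_iff_eq.1 hax ▸ ha) (Nat.not_even_iff_odd.2 hx)
  · exact ⟨0, rfl⟩

lemma Symplectic.two_mul_le_sum_of_odd_head {p : List ℕ} (hp : Symplectic p) {m : ℕ}
    (hhead : p.getD 0 0 = m) (hm : Odd m) : 2 * m ≤ p.sum := by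
  obtain _ | ⟨a, t⟩ := p
  · exact absurd hm (by simp [← hhead])
  have hcount : 2 ≤ (a :: t).count m := by
    obtain ⟨j, hj⟩ := hp m hm
    have : 0 < (a :: t).count m := List.count_pos_iff.2 (by simp [← hhead])
    omega
  calc 2 * m ≤ (a :: t).count m * m := Nat.mul_le_mul_right m hcount
    _ ≤ (a :: t).sum := List.count_mul_le_sum _ _

lemma exists_symplectic_partition_with_head {N m k : ℕ} (hN : Even N) (hm : 0 < m) (hk : 0 < k)
    (hkm : k * m ≤ N) (hparity : Even k ∨ Even m) :
    ∃ p : List ℕ, IsPartitionOf p N ∧ Symplectic p ∧ p.getD 0 0 = m := by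
  refine ⟨List.replicate k m ++ List.replicate (N - k * m) 1, ?_, ?_, ?_⟩
  · have h := (isPartitionOf_replicate hm k).append (isPartitionOf_replicate one_pos (N - k * m))
      (fun x hx y hy ↦ by rw [List.eq_of_mem_replicate hx, List.eq_of_mem_replicate hy]; exact hm)
    rwa [mul_one, Nat.add_sub_cancel' hkm] at h
  · have hones : Even (N - k * m) := (Nat.even_sub hkm).2 (by
      simp only [hN, true_iff]
      exact hparity.elim (·.mul_right m) (·.mul_left k))
    exact (symplectic_replicate hparity).append (symplectic_replicate (Or.inl hones))
  · obtain ⟨k, rfl⟩ := Nat.exists_eq_add_of_lt hk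
    simp [List.replicate_succ]

theorem stmt3_general (n m : ℕ) (hm : 1 ≤ m) (hm2 : m ≤ 2 * n) :
    (∃ p : List ℕ, IsPartitionOf p (2 * n) ∧ Symplectic p ∧ p.getD 0 0 = m) ↔
      (m ≤ n ∨ Even m) := by
  constructor
  · rintro ⟨p, ⟨-, -, hsum⟩, hsymp, hhead⟩
    rcases Nat.even_or_odd m with hev | hodd
    · exact Or.inr hev
    · have := hsymp.two_mul_le_sum_of_odd_head hhead hodd
      omega
  · rintro (hle | hev)
    · exact exists_symplectic_partition_with_head (even_two_mul n) hm two_pos (by omega)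
        (Or.inl even_two)
    · exact exists_symplectic_partition_with_head (even_two_mul n) hm one_pos (by omega) (Or.inr hev)

/-- For `1 ≤ m ≤ 2n`, there exists a symplectic partition of `2n` with largest part `m`
iff `m ≤ n` or `m` is even. -/
theorem stmt3 (n m : ℕ) (hn : 1 ≤ n) (hm : 1 ≤ m) (hm2 : m ≤ 2 * n) :
    (∃ p : List ℕ, IsPartitionOf p (2 * n) ∧ Symplectic p ∧ p.getD 0 0 = m) ↔
      (m ≤ n ∨ Even m) :=
  stmt3_general n m hm hm2
end

section
/- Let n ≥ 2 and let m be an odd integer with n + 1 ≤ m ≤ 2n − 2. Then there is no orthogonal partition q of 2n such that either (the largest part of q equals m and occurs at least twice) or (the largest part of q equals m + 1 and is strictly larger than the second-largest part). Equivalently, no orthogonal partition q of 2n satisfies cl(q) = m, where cl(q) = q₁ if q₁ = q₂ and q₁ − 1 if q₁ > q₂. -/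
/-- A partition is orthogonal if every even part occurs an even number of times. -/
def Orthogonal (p : List ℕ) : Prop :=
  ∀ x : ℕ, Even x → Even (p.count x)

/-- `clP p = p₁` if the two largest parts agree, and `p₁ - 1` otherwise. -/
def clP (p : List ℕ) : ℕ :=
  if p.getD 0 0 = p.getD 1 0 then p.getD 0 0 else p.getD 0 0 - 1

/-!
A part `m > n` repeated twice already exceeds `2n`. A largest part `m + 1` that is not
repeated is even (as `m` is odd) and occurs exactly once, which orthogonality forbids.
Finally `cl(q) = m` with `m > 0` means exactly one of these two shapes.
-/

namespace List

theorem count_smul_le_sum {M : Type*} [AddCommMonoid M] [PartialOrder M]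
    [CanonicallyOrderedAdd M] [DecidableEq M] (l : List M) (x : M) :
    l.count x • x ≤ l.sum :=
  calc l.count x • x = (l.filter (· == x)).sum := by rw [filter_beq, sum_replicate]
    _ ≤ l.sum := filter_sublist.sum_le_sum fun _ _ => zero_le

theorem getD_one_le_getD_zero {l : List ℕ} (hl : l.Pairwise (· ≥ ·)) :
    l.getD 1 0 ≤ l.getD 0 0 := by
  match l, hl with
  | [], _ | [_], _ => simp
  | _ :: _ :: _, hl => simpa using (pairwise_cons.mp hl).1 _ mem_cons_self

theorem count_getD_zero_eq_one {l : List ℕ} (hl : l.Pairwise (· ≥ ·))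
    (hlt : l.getD 1 0 < l.getD 0 0) : l.count (l.getD 0 0) = 1 := by
  match l, hl with
  | [], _ => simp at hlt
  | [a], _ => simp
  | a :: b :: t, hl =>
    simp only [getD_cons_zero, getD_cons_succ] at hlt ⊢
    have hbt : ∀ c ∈ t, c ≤ b := (pairwise_cons.mp (pairwise_cons.mp hl).2).1
    have ha : a ∉ t := fun hat => (hbt a hat).not_gt hlt
    simp [count_eq_zero_of_not_mem ha, hlt.ne]

theorem two_le_count_getD_zero {l : List ℕ} (hpos : 0 < l.getD 0 0)
    (heq : l.getD 0 0 = l.getD 1 0) : 2 ≤ l.count (l.getD 0 0) := by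
  match l with
  | [] | [_] => simp_all
  | a :: b :: t => simp_all

end List

theorem Orthogonal.getD_zero_eq_getD_one_of_even {q : List ℕ} (horth : Orthogonal q)
    (hq : q.Pairwise (· ≥ ·)) (heven : Even (q.getD 0 0)) : q.getD 0 0 = q.getD 1 0 := by
  by_contra hne
  have hone := List.count_getD_zero_eq_one hq ((List.getD_one_le_getD_zero hq).lt_of_ne' hne)
  have := horth _ heven
  rw [hone] at this
  exact Nat.not_even_one this

theorem clP_eq_cases {q : List ℕ} {m : ℕ} (hq : q.Pairwise (· ≥ ·)) (hm : 0 < m)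
    (hcl : clP q = m) :
    (q.getD 0 0 = m ∧ 2 ≤ q.count m) ∨ (q.getD 0 0 = m + 1 ∧ q.getD 1 0 < m + 1) := by
  unfold clP at hcl
  split_ifs at hcl with heq
  · subst hcl
    exact Or.inl ⟨rfl, List.two_le_count_getD_zero hm heq⟩
  · have hle := List.getD_one_le_getD_zero hq
    exact Or.inr ⟨by omega, by omega⟩

theorem stmt4_general (n m : ℕ) (hodd : Odd m) (h1 : n + 1 ≤ m) :
    (¬ ∃ q : List ℕ, IsPartitionOf q (2 * n) ∧ Orthogonal q ∧
        ((q.getD 0 0 = m ∧ 2 ≤ q.count m) ∨ (q.getD 0 0 = m + 1 ∧ q.getD 1 0 < m + 1))) ∧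
    (¬ ∃ q : List ℕ, IsPartitionOf q (2 * n) ∧ Orthogonal q ∧ clP q = m) := by
  have key : ¬ ∃ q : List ℕ, IsPartitionOf q (2 * n) ∧ Orthogonal q ∧
      ((q.getD 0 0 = m ∧ 2 ≤ q.count m) ∨ (q.getD 0 0 = m + 1 ∧ q.getD 1 0 < m + 1)) := by
    rintro ⟨q, ⟨hsort, -, hsum⟩, horth, ⟨-, hcount⟩ | ⟨htop, hlt⟩⟩
    · have hle := q.count_smul_le_sum m
      rw [smul_eq_mul, hsum] at hle
      nlinarith
    · have heq := horth.getD_zero_eq_getD_one_of_even hsort (htop ▸ hodd.add_one)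
      omega
  exact ⟨key, fun ⟨q, hq, horth, hcl⟩ => key ⟨q, hq, horth, clP_eq_cases hq.1 hodd.pos hcl⟩⟩

/-- For `n ≥ 2` and `m` odd with `n + 1 ≤ m ≤ 2n - 2`, there is no orthogonal partition `q`
of `2n` whose largest part is `m` and repeated, or whose largest part is `m + 1` and not
repeated; equivalently, no orthogonal partition `q` of `2n` has `clP q = m`. -/
theorem stmt4 (n m : ℕ) (hn : 2 ≤ n) (hodd : Odd m) (h1 : n + 1 ≤ m) (h2 : m ≤ 2 * n - 2) :
    (¬ ∃ q : List ℕ, IsPartitionOf q (2 * n) ∧ Orthogonal q ∧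
        ((q.getD 0 0 = m ∧ 2 ≤ q.count m) ∨ (q.getD 0 0 = m + 1 ∧ q.getD 1 0 < m + 1))) ∧
    (¬ ∃ q : List ℕ, IsPartitionOf q (2 * n) ∧ Orthogonal q ∧ clP q = m) :=
  stmt4_general n m hodd h1
end

section
/- Let n ≥ 1 and let m be an even integer with 1 ≤ m ≤ 2n. Let b be the largest integer with b·m ≤ 2n and v = 2n − b·m. Then (m^b, v) (omitting v if v = 0) is a symplectic partition of 2n, and every symplectic partition of 2n all of whose parts are at most m is dominated by (m^b, v) in the dominance order. -/
/-!
The partition `(m^b, v)` takes as many parts `m` as possible: its first `k` parts sum to `k * m`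
for `k ≤ b`, which bounds the first `k` parts of any partition with parts at most `m`, and to the
whole of `2n` for `k > b`. It is symplectic because `m` and `v = 2n - b m` are both even.
-/

def blockPartition (m b v : ℕ) : List ℕ :=
  List.replicate b m ++ if v = 0 then [] else [v]

lemma sum_blockPartition (m b v : ℕ) : (blockPartition m b v).sum = b * m + v := by
  by_cases hv : v = 0 <;> simp [blockPartition, hv]

lemma length_blockPartition_le (m b v : ℕ) : (blockPartition m b v).length ≤ b + 1 := by
  by_cases hv : v = 0 <;> simp [blockPartition, hv]

lemma sum_take_blockPartition {m b k : ℕ} (v : ℕ) (hk : k ≤ b) :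
    ((blockPartition m b v).take k).sum = k * m := by
  rw [blockPartition, List.take_append_of_le_length (by simpa using hk), List.take_replicate,
    List.sum_replicate, min_eq_left hk, smul_eq_mul]

lemma isPartitionOf_blockPartition {m b v : ℕ} (hm : 0 < m) (hvm : v ≤ m) :
    IsPartitionOf (blockPartition m b v) (b * m + v) := by
  refine ⟨?_, ?_, sum_blockPartition m b v⟩
  · rw [blockPartition, List.pairwise_append]
    refine ⟨List.pairwise_replicate.2 (Or.inr le_rfl), ?_, ?_⟩
    · split_ifs <;> simp
    · intro a ha x hx
      rw [List.eq_of_mem_replicate ha]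
      split_ifs at hx <;> simp_all
  · intro x hx
    rcases List.mem_append.1 hx with h | h
    · rwa [List.eq_of_mem_replicate h]
    · split_ifs at h <;> simp_all [Nat.pos_iff_ne_zero]

lemma symplectic_blockPartition {m v : ℕ} (hm : Even m) (hv : Even v) (b : ℕ) :
    Symplectic (blockPartition m b v) := by
  intro x hx
  have hxm : m ≠ x := by rintro rfl; exact Nat.not_even_iff_odd.2 hx hm
  have hxv : v ≠ x := by rintro rfl; exact Nat.not_even_iff_odd.2 hx hv
  by_cases h0 : v = 0 <;> simp [blockPartition, h0, List.count_replicate, hxm, hxv]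

lemma sum_take_le_mul_of_forall_le {q : List ℕ} {m : ℕ} (h : ∀ x ∈ q, x ≤ m) (k : ℕ) :
    (q.take k).sum ≤ k * m :=
  calc (q.take k).sum ≤ (q.take k).length • m :=
        List.sum_le_card_nsmul _ _ fun x hx ↦ h x (List.mem_of_mem_take hx)
    _ ≤ k * m := Nat.mul_le_mul_right m (List.length_take_le k q)

lemma dominates_blockPartition {m b v : ℕ} {q : List ℕ} (hq : q.sum ≤ b * m + v)
    (hqm : ∀ x ∈ q, x ≤ m) : Dominates (blockPartition m b v) q := by
  intro k
  rcases le_or_gt k b with hk | hk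
  · rw [sum_take_blockPartition v hk]
    exact sum_take_le_mul_of_forall_le hqm k
  · rw [List.take_of_length_le ((length_blockPartition_le m b v).trans hk),
      sum_blockPartition]
    exact ((List.take_sublist k q).sum_le_sum fun _ _ ↦ Nat.zero_le _).trans hq

theorem stmt5_general (n m b v : ℕ) (hme : Even m) (hm1 : 1 ≤ m)
    (hb : b * m ≤ 2 * n) (hbmax : 2 * n < (b + 1) * m) (hv : v = 2 * n - b * m) :
    IsPartitionOf (List.replicate b m ++ if v = 0 then [] else [v]) (2 * n) ∧
    Symplectic (List.replicate b m ++ if v = 0 then [] else [v]) ∧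
    ∀ q : List ℕ, IsPartitionOf q (2 * n) → Symplectic q → (∀ x ∈ q, x ≤ m) →
      Dominates (List.replicate b m ++ if v = 0 then [] else [v]) q := by
  have htotal : 2 * n = b * m + v := by omega
  have hvm : v ≤ m := by rw [add_one_mul] at hbmax; omega
  have hve : Even v := by
    rw [hv, Nat.even_sub hb]
    exact iff_of_true (even_two_mul n) (hme.mul_left b)
  refine ⟨htotal ▸ isPartitionOf_blockPartition hm1 hvm, symplectic_blockPartition hme hve b, ?_⟩
  intro q hq _ hqm
  exact dominates_blockPartition (hq.2.2.trans htotal).le hqm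

/-- For even `m` with `1 ≤ m ≤ 2n`, `b` maximal with `b*m ≤ 2n` and `v = 2n - b*m`,
the list `(m^b, v)` (omitting `v` if `v = 0`) is a symplectic partition of `2n` dominating
every symplectic partition of `2n` all of whose parts are at most `m`. -/
theorem stmt5 (n m b v : ℕ) (hn : 1 ≤ n) (hme : Even m) (hm1 : 1 ≤ m) (hm2 : m ≤ 2 * n)
    (hb : b * m ≤ 2 * n) (hbmax : 2 * n < (b + 1) * m) (hv : v = 2 * n - b * m) :
    IsPartitionOf (List.replicate b m ++ if v = 0 then [] else [v]) (2 * n) ∧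
    Symplectic (List.replicate b m ++ if v = 0 then [] else [v]) ∧
    ∀ q : List ℕ, IsPartitionOf q (2 * n) → Symplectic q → (∀ x ∈ q, x ≤ m) →
      Dominates (List.replicate b m ++ if v = 0 then [] else [v]) q :=
  stmt5_general n m b v hme hm1 hb hbmax hv
end

section
/- Let n ≥ 2 and let m be an odd integer with 1 ≤ m ≤ n. Let b be the largest integer with b·m ≤ 2n, suppose b is even and b·m < 2n, and set v = 2n − b·m − 1. Then (m^b, v, 1) is an orthogonal partition of 2n, and every orthogonal partition q of 2n with cl(q) ≤ m (where cl(q) = q₁ if q₁ = q₂ and q₁ − 1 otherwise) is dominated by (m^b, v, 1) in the dominance order. -/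
open List

lemma even_length_of_forall_even_count {α : Type*} [DecidableEq α] (l : List α)
    (h : ∀ x ∈ l, Even (l.count x)) : Even l.length := by
  rw [← Multiset.coe_card, ← Multiset.toFinset_sum_count_eq]
  refine Finset.even_sum _ fun x hx => ?_
  rw [Multiset.mem_toFinset, Multiset.mem_coe] at hx
  rw [Multiset.coe_count]
  exact h x hx

lemma sum_add_countP_even_mod_two (l : List ℕ) :
    (l.sum + l.countP (· % 2 = 0)) % 2 = l.length % 2 := by
  induction l with
  | nil => rfl
  | cons a l ih => by_cases h : a % 2 = 0 <;> simp [h] <;> omega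

lemma orthogonal_of_forall_odd {l : List ℕ} (h : ∀ x ∈ l, Odd x) : Orthogonal l := by
  intro x hx
  rw [count_eq_zero_of_not_mem fun hmem => Nat.not_even_iff_odd.mpr (h x hmem) hx]
  exact Even.zero

namespace Orthogonal

lemma even_countP_even {q : List ℕ} (h : Orthogonal q) : Even (q.countP (· % 2 = 0)) := by
  rw [countP_eq_length_filter]
  refine even_length_of_forall_even_count _ fun x hx => ?_
  have hxe : x % 2 = 0 := by simpa using (mem_filter.mp hx).2
  rw [count_filter (by simpa using hxe)]
  exact h x (Nat.even_iff.mpr hxe)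

lemma sum_mod_two_eq_length_mod_two {q : List ℕ} (h : Orthogonal q) : q.sum % 2 = q.length % 2 := by
  obtain ⟨e, he⟩ := h.even_countP_even
  have := sum_add_countP_even_mod_two q
  omega

end Orthogonal

lemma head_le_of_clP_le {a m : ℕ} {r : List ℕ} (hs : (a :: r).Pairwise (· ≥ ·))
    (ho : Orthogonal (a :: r)) (hodd : Odd m) (hcl : clP (a :: r) ≤ m) : a ≤ m := by
  by_contra! ham
  have hbig : a = m + 1 ∧ ∀ x ∈ r, x < a := by
    match r, hs, hcl with
    | [], _, hcl =>
      simp only [clP, getD_cons_zero, getD_nil, getD_cons_succ] at hcl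
      split_ifs at hcl <;> simp <;> omega
    | c :: r', hs, hcl =>
      have hca : c ≤ a := rel_of_pairwise_cons hs mem_cons_self
      have hrc : ∀ x ∈ r', x ≤ c := fun x hx => rel_of_pairwise_cons (pairwise_cons.mp hs).2 hx
      simp only [clP, getD_cons_zero, getD_cons_succ] at hcl
      split_ifs at hcl with hac
      · omega
      · refine ⟨by omega, fun x hx => ?_⟩
        rcases mem_cons.mp hx with rfl | hx
        · omega
        · have := hrc x hx; omega
  have hcount : (a :: r).count a = 1 := by
    rw [count_cons_self, count_eq_zero_of_not_mem fun h => (hbig.2 a h).false]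
  have := ho a (by rw [hbig.1]; exact hodd.add_one)
  rw [hcount] at this
  exact Nat.not_even_one this

lemma le_of_mem_of_clP_le {q : List ℕ} {m : ℕ} (hs : q.Pairwise (· ≥ ·)) (ho : Orthogonal q)
    (hodd : Odd m) (hcl : clP q ≤ m) : ∀ x ∈ q, x ≤ m := by
  match q, hs with
  | [], _ => simp
  | a :: r, hs =>
    have ham := head_le_of_clP_le hs ho hodd hcl
    intro x hx
    rcases mem_cons.mp hx with rfl | hx
    · exact ham
    · exact (rel_of_pairwise_cons hs hx).trans ham

lemma sum_take_replicate_append (b m k : ℕ) (l : List ℕ) :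
    ((replicate b m ++ l).take k).sum = min k b * m + (l.take (k - b)).sum := by
  simp [take_append, take_replicate]

lemma sum_take_le_mul {q : List ℕ} {m : ℕ} (hle : ∀ x ∈ q, x ≤ m) (k : ℕ) :
    (q.take k).sum ≤ k * m :=
  calc (q.take k).sum ≤ (q.take k).length • m :=
        sum_le_card_nsmul _ _ fun x hx => hle x (mem_of_mem_take hx)
    _ ≤ k * m := Nat.mul_le_mul_right m (length_take_le k q)

lemma sum_take_lt_sum {q : List ℕ} (hpos : ∀ x ∈ q, 0 < x) {k : ℕ} (hk : k < q.length) :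
    (q.take k).sum < q.sum := by
  rw [← take_append_drop k q, sum_append, take_append_drop]
  obtain ⟨x, l, hd⟩ := exists_cons_of_length_pos (l := q.drop k) (by simpa using hk)
  have := hpos x (mem_of_mem_drop (hd ▸ mem_cons_self))
  rw [hd, sum_cons]
  omega

lemma dominates_replicate_append_pair {q : List ℕ} {m b v : ℕ} (hpos : ∀ x ∈ q, 0 < x)
    (hle : ∀ x ∈ q, x ≤ m) (hsum : q.sum = b * m + v + 1) (hlen : q.length ≠ b + 1) :
    Dominates (replicate b m ++ [v, 1]) q := by
  have hb : b < q.length := by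
    by_contra! h
    have := (sum_le_card_nsmul q m hle).trans (Nat.mul_le_mul_right m h)
    omega
  intro k
  rw [sum_take_replicate_append]
  rcases Nat.lt_trichotomy k (b + 1) with hk | rfl | hk
  · rw [Nat.sub_eq_zero_of_le (by omega), min_eq_left (by omega)]
    simpa using sum_take_le_mul hle k
  · have := sum_take_lt_sum hpos (k := b + 1) (by omega)
    simp
    omega
  · rw [take_of_length_le (l := [v, 1]) (by simp; omega), min_eq_right (by omega)]
    have := (take_sublist k q).sum_le_sum fun _ _ => Nat.zero_le _
    simp
    omega

theorem stmt7_general (n m b v : ℕ) (hodd : Odd m)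
    (hbmax : 2 * n < (b + 1) * m) (hbe : Even b)
    (hlt : b * m < 2 * n) (hv : v = 2 * n - b * m - 1) :
    IsPartitionOf (List.replicate b m ++ [v, 1]) (2 * n) ∧
    Orthogonal (List.replicate b m ++ [v, 1]) ∧
    ∀ q : List ℕ, IsPartitionOf q (2 * n) → Orthogonal q → clP q ≤ m →
      Dominates (List.replicate b m ++ [v, 1]) q := by
  obtain ⟨s, hbm⟩ := hbe.mul_right m
  have hsum : b * m + v + 1 = 2 * n := by omega
  have hvm : v < m := by rw [add_one_mul] at hbmax; omega
  have hvodd : Odd v := Nat.odd_iff.mpr (by omega)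
  refine ⟨⟨?_, ?_, ?_⟩, orthogonal_of_forall_odd ?_, ?_⟩
  · simp [pairwise_append, pairwise_replicate]; omega
  · simp; omega
  · simp [sum_replicate]; omega
  · simp only [mem_append, mem_replicate, mem_cons, not_mem_nil, or_false]
    rintro x (⟨-, rfl⟩ | rfl | rfl)
    exacts [hodd, hvodd, odd_one]
  · rintro q ⟨hs, hpos, hqsum⟩ ho hcl
    refine dominates_replicate_append_pair hpos (le_of_mem_of_clP_le hs ho hodd hcl)
      (hqsum.trans hsum.symm) fun hlen => ?_
    have := ho.sum_mod_two_eq_length_mod_two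
    obtain ⟨c, hc⟩ := hbe
    omega

/-- For `n ≥ 2`, `m` odd with `1 ≤ m ≤ n`, `b` maximal with `b*m ≤ 2n`, `b` even with
`b*m < 2n`, and `v = 2n - b*m - 1`, the list `(m^b, v, 1)` is an orthogonal partition of
`2n` dominating every orthogonal partition `q` of `2n` with `clP q ≤ m`. -/
theorem stmt7 (n m b v : ℕ) (hn : 2 ≤ n) (hodd : Odd m) (hm1 : 1 ≤ m) (hmn : m ≤ n)
    (hb : b * m ≤ 2 * n) (hbmax : 2 * n < (b + 1) * m) (hbe : Even b)
    (hlt : b * m < 2 * n) (hv : v = 2 * n - b * m - 1) :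
    IsPartitionOf (List.replicate b m ++ [v, 1]) (2 * n) ∧
    Orthogonal (List.replicate b m ++ [v, 1]) ∧
    ∀ q : List ℕ, IsPartitionOf q (2 * n) → Orthogonal q → clP q ≤ m →
      Dominates (List.replicate b m ++ [v, 1]) q :=
  stmt7_general n m b v hodd hbmax hbe hlt hv
end
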